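/- Every hypercomplex manifold (M,I,J,K) admits a unique torsion-free affine connection ∇ (the Obata connection) satisfying ∇I = ∇J = ∇K = 0. -/

import Mathlib

/-!
STATEMENT 19.  Every hypercomplex manifold `(M,I,J,K)` admits a unique torsion-free
affine connection `∇` (the Obata connection) satisfying `∇I = ∇J = ∇K = 0`.

The smooth manifold is modelled Lie–Rinehart style: a commutative ℝ-algebra `C` of
smooth functions and a `C`-module `V` of vector fields carrying a Lie bracket which
acts on `C` by derivations.  The hypercomplex structure is a triple of `C`-linear
endomorphisms `I`, `J`, `K` of `V` satisfying the quaternionic relations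
`I² = J² = K² = IJK = -Id`, each with vanishing Nijenhuis tensor (integrability).
An affine connection is a map `∇ : V → V → V` which is tensorial in the first
argument and a derivation in the second.
-/

open Module

/-- Lie–Rinehart style model of the vector fields of a hypercomplex manifold
`(M,I,J,K)`. -/
structure HypercomplexVectorFields where
  /-- the algebra of smooth functions -/
  C : Type
  [instC : CommRing C]
  [instAlg : Algebra ℝ C]
  /-- the module of vector fields -/
  V : Type
  [instV : AddCommGroup V]
  [instModC : Module C V]
  [instModR : Module ℝ V]
  [instTower : IsScalarTower ℝ C V]
  /-- the Lie bracket of vector fields -/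
  bracket : V → V → V
  bracket_add_left : ∀ X Y Z, bracket (X + Y) Z = bracket X Z + bracket Y Z
  bracket_add_right : ∀ X Y Z, bracket X (Y + Z) = bracket X Y + bracket X Z
  bracket_smul_left : ∀ (r : ℝ) (X Y), bracket (r • X) Y = r • bracket X Y
  bracket_antisymm : ∀ X Y, bracket X Y = - bracket Y X
  jacobi : ∀ X Y Z,
    bracket X (bracket Y Z) + bracket Y (bracket Z X) + bracket Z (bracket X Y) = 0
  /-- the action of vector fields on functions by derivations -/
  act : V → C → C
  act_leibniz : ∀ X (f : C) Y, bracket X (f • Y) = f • bracket X Y + (act X f) • Y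
  /-- the three complex structures -/
  I : V →ₗ[C] V
  J : V →ₗ[C] V
  K : V →ₗ[C] V
  I_sq : ∀ v, I (I v) = -v
  J_sq : ∀ v, J (J v) = -v
  K_sq : ∀ v, K (K v) = -v
  IJK : ∀ v, I (J (K v)) = -v
  /-- integrability: the Nijenhuis tensors of `I`, `J` and `K` vanish -/
  I_integrable : ∀ X Y,
    bracket (I X) (I Y) - I (bracket (I X) Y) - I (bracket X (I Y)) +
      I (I (bracket X Y)) = 0
  J_integrable : ∀ X Y,
    bracket (J X) (J Y) - J (bracket (J X) Y) - J (bracket X (J Y)) +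
      J (J (bracket X Y)) = 0
  K_integrable : ∀ X Y,
    bracket (K X) (K Y) - K (bracket (K X) Y) - K (bracket X (K Y)) +
      K (K (bracket X Y)) = 0

namespace HypercomplexVectorFields

attribute [instance] instC instAlg instV instModC instModR instTower

variable (M : HypercomplexVectorFields)

/-- `D` is an affine connection: additive in both arguments, tensorial (`C`-linear)
in the first argument, and a Leibniz derivation in the second argument. -/
def IsConnection (D : M.V → M.V → M.V) : Prop :=
  (∀ X Y Z, D (X + Y) Z = D X Z + D Y Z) ∧
  (∀ X Y Z, D X (Y + Z) = D X Y + D X Z) ∧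
  (∀ (f : M.C) X Y, D (f • X) Y = f • D X Y) ∧
  (∀ (f : M.C) X Y, D X (f • Y) = f • D X Y + (M.act X f) • Y)

/-- `D` is torsion-free: `D_X Y - D_Y X = [X,Y]`. -/
def IsTorsionFree (D : M.V → M.V → M.V) : Prop :=
  ∀ X Y, D X Y - D Y X = M.bracket X Y

/-- `D` preserves the endomorphism `L`, i.e. `∇L = 0`. -/
def Preserves (D : M.V → M.V → M.V) (L : M.V → M.V) : Prop :=
  ∀ X Y, D X (L Y) = L (D X Y)

end HypercomplexVectorFields

/-!
Uniqueness: the difference `S` of two torsion-free connections preserving `I` and `J` is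
symmetric and commutes with `I` and `J` in its second argument, hence in both. Then
`S(JX, IY) = IJ S(X, Y) = K S(X, Y)`, while by symmetry `S(JX, IY) = S(IY, JX) = JI S(X, Y)
= -K S(X, Y)`, so `S = 0`.

Existence: the explicit connection
`∇_X Y = ½([X,Y] + J[JX,Y] - I[X,IY] - K[JX,IY])`.
It preserves `I` by the quaternion relations alone; torsion-freeness and `∇J = 0` come from
the vanishing of the Nijenhuis tensors; and `∇K = 0` follows from `K = IJ`.
-/

namespace HypercomplexVectorFields

variable (M : HypercomplexVectorFields)

section Quaternions

variable (v : M.V)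

lemma I_J : M.I (M.J v) = M.K v := by
  simpa [M.K_sq] using M.IJK (M.K v)

lemma J_K : M.J (M.K v) = M.I v :=
  calc M.J (M.K v) = -M.I (M.I (M.J (M.K v))) := by rw [M.I_sq, neg_neg]
    _ = M.I v := by rw [M.IJK, map_neg, neg_neg]

lemma K_I : M.K (M.I v) = M.J v :=
  calc M.K (M.I v) = -M.J (M.J (M.K (M.I v))) := by rw [M.J_sq, neg_neg]
    _ = M.J v := by rw [M.J_K, M.I_sq, map_neg, neg_neg]

lemma J_I : M.J (M.I v) = -M.K v := by
  rw [← M.J_K, M.J_sq]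

lemma K_J : M.K (M.J v) = -M.I v := by
  rw [← M.K_I, M.K_sq]

lemma I_K : M.I (M.K v) = -M.J v := by
  rw [← M.I_J, M.I_sq]

end Quaternions

lemma bracket_neg_right (X Y : M.V) : M.bracket X (-Y) = -M.bracket X Y :=
  (AddMonoidHom.mk' (M.bracket X) (M.bracket_add_right X)).map_neg Y

lemma act_leibniz_left (f : M.C) (X Y : M.V) :
    M.bracket (f • X) Y = f • M.bracket X Y - M.act Y f • X := by
  rw [M.bracket_antisymm, M.act_leibniz, M.bracket_antisymm Y X]
  module

lemma bracket_map_map_of_nijenhuis {L : M.V →ₗ[M.C] M.V} (hL : ∀ v, L (L v) = -v)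
    (hN : ∀ X Y, M.bracket (L X) (L Y) - L (M.bracket (L X) Y) - L (M.bracket X (L Y)) +
      L (L (M.bracket X Y)) = 0) (X Y : M.V) :
    M.bracket (L X) (L Y) = L (M.bracket (L X) Y) + L (M.bracket X (L Y)) + M.bracket X Y := by
  linear_combination (norm := module) hN X Y - hL (M.bracket X Y)

lemma bracket_I_I (X Y : M.V) : M.bracket (M.I X) (M.I Y) =
    M.I (M.bracket (M.I X) Y) + M.I (M.bracket X (M.I Y)) + M.bracket X Y :=
  M.bracket_map_map_of_nijenhuis M.I_sq M.I_integrable X Y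

lemma bracket_J_J (X Y : M.V) : M.bracket (M.J X) (M.J Y) =
    M.J (M.bracket (M.J X) Y) + M.J (M.bracket X (M.J Y)) + M.bracket X Y :=
  M.bracket_map_map_of_nijenhuis M.J_sq M.J_integrable X Y

lemma bracket_K_K (X Y : M.V) : M.bracket (M.K X) (M.K Y) =
    M.K (M.bracket (M.K X) Y) + M.K (M.bracket X (M.K Y)) + M.bracket X Y :=
  M.bracket_map_map_of_nijenhuis M.K_sq M.K_integrable X Y

lemma eq_zero_of_symm_of_commute_I_J {S : M.V → M.V → M.V} (hS : ∀ X Y, S X Y = S Y X)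
    (hI : ∀ X Y, S X (M.I Y) = M.I (S X Y)) (hJ : ∀ X Y, S X (M.J Y) = M.J (S X Y))
    (X Y : M.V) : S X Y = 0 := by
  have hpos : S (M.J X) (M.I Y) = M.K (S X Y) := by
    rw [hI, hS, hJ, hS, I_J]
  have hneg : S (M.J X) (M.I Y) = -M.K (S X Y) := by
    rw [hS, hJ, hS, hI, J_I]
  have hK : M.K (S X Y) = 0 := by
    have h2 : (2 : ℝ) • M.K (S X Y) = 0 := by
      rw [two_smul]
      nth_rewrite 2 [hpos.symm.trans hneg]
      exact add_neg_cancel _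
    exact (smul_eq_zero.mp h2).resolve_left two_ne_zero
  calc S X Y = -M.K (M.K (S X Y)) := by rw [M.K_sq, neg_neg]
    _ = 0 := by rw [hK, map_zero, neg_zero]

lemma eq_of_isTorsionFree_of_preserves {D D' : M.V → M.V → M.V}
    (hT : M.IsTorsionFree D) (hT' : M.IsTorsionFree D') (hI : M.Preserves D M.I)
    (hI' : M.Preserves D' M.I) (hJ : M.Preserves D M.J) (hJ' : M.Preserves D' M.J) :
    D = D' := by
  funext X Y
  rw [← sub_eq_zero]
  refine M.eq_zero_of_symm_of_commute_I_J (S := fun X Y => D X Y - D' X Y) (fun X Y => ?_)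
    (fun X Y => ?_) (fun X Y => ?_) X Y
  · linear_combination (norm := module) hT X Y - hT' X Y
  · rw [hI, hI', map_sub]
  · rw [hJ, hJ', map_sub]

/-- The formula is forced: computing `D_{JX} (IY)` once by `∇I = 0` and once by
torsion-freeness and `∇J = 0` expresses `K (D_X Y)` through brackets alone. -/
noncomputable def obata (X Y : M.V) : M.V :=
  (2⁻¹ : ℝ) • (M.bracket X Y + M.J (M.bracket (M.J X) Y) - M.I (M.bracket X (M.I Y)) -
    M.K (M.bracket (M.J X) (M.I Y)))

lemma isConnection_obata : M.IsConnection M.obata := by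
  refine ⟨fun X Y Z => ?_, fun X Y Z => ?_, fun f X Y => ?_, fun f X Y => ?_⟩
  · simp only [obata, map_add, M.bracket_add_left]
    module
  · simp only [obata, map_add, M.bracket_add_right]
    module
  · rw [obata, obata, smul_comm f (2⁻¹ : ℝ)]
    congr 1
    simp only [map_smul, act_leibniz_left, map_sub, M.J_sq, K_J]
    module
  · rw [obata, obata, smul_comm f (2⁻¹ : ℝ), ← sub_eq_iff_eq_add', ← smul_sub,
      inv_smul_eq_iff₀ two_ne_zero, two_smul]
    simp only [map_smul, M.act_leibniz, map_add, M.I_sq, K_I]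
    module

lemma isTorsionFree_obata : M.IsTorsionFree M.obata := by
  intro X Y
  have nijK := M.bracket_K_K (M.I X) (M.I Y)
  simp only [K_I] at nijK
  have antisymmJ := congrArg M.J (M.bracket_antisymm (M.J Y) X)
  have antisymmI := congrArg M.I (M.bracket_antisymm Y (M.I X))
  have antisymmK := congrArg M.K (M.bracket_antisymm (M.J Y) (M.I X))
  rw [map_neg] at antisymmJ antisymmI antisymmK
  unfold obata
  linear_combination (norm := module) (2⁻¹ : ℝ) • (M.bracket_I_I X Y - M.bracket_J_J X Y +
    nijK - M.bracket_antisymm Y X - antisymmJ + antisymmI + antisymmK)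

lemma obata_preserves_I : M.Preserves M.obata M.I := by
  intro X Y
  simp only [obata, M.I_sq, bracket_neg_right, map_neg, map_sub, map_add, I_J, I_K,
    LinearMap.map_smul_of_tower]
  module

lemma obata_preserves_J : M.Preserves M.obata M.J := by
  intro X Y
  have nijJY := M.bracket_J_J X (M.J Y)
  have nijKY := congrArg M.I (M.bracket_J_J X (M.K Y))
  simp only [M.J_sq, bracket_neg_right, map_neg, map_add, J_K, I_J] at nijJY nijKY
  simp only [obata, map_sub, map_add, I_J, J_I, J_K, M.J_sq, LinearMap.map_smul_of_tower]
  linear_combination (norm := module) (2⁻¹ : ℝ) • (nijKY - nijJY)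

variable {M} in
lemma Preserves.comp {D : M.V → M.V → M.V} {L L' : M.V → M.V} (hL : M.Preserves D L)
    (hL' : M.Preserves D L') : M.Preserves D (L ∘ L') :=
  fun X Y => (hL X (L' Y)).trans (congrArg L (hL' X Y))

lemma obata_preserves_K : M.Preserves M.obata M.K := by
  have hK : ⇑M.K = ⇑M.I ∘ ⇑M.J := funext fun v => (M.I_J v).symm
  rw [hK]
  exact M.obata_preserves_I.comp M.obata_preserves_J

end HypercomplexVectorFields

/-- Obata: every hypercomplex manifold admits a unique torsion-free
affine connection `∇` with `∇I = ∇J = ∇K = 0`. -/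
theorem obata_connection_exists_unique (M : HypercomplexVectorFields) :
    ∃! D : M.V → M.V → M.V,
      M.IsConnection D ∧ M.IsTorsionFree D ∧
      M.Preserves D M.I ∧ M.Preserves D M.J ∧ M.Preserves D M.K := by
  refine ⟨M.obata, ⟨M.isConnection_obata, M.isTorsionFree_obata, M.obata_preserves_I,
    M.obata_preserves_J, M.obata_preserves_K⟩, fun D ⟨_, hT, hI, hJ, _⟩ => ?_⟩
  exact M.eq_of_isTorsionFree_of_preserves hT M.isTorsionFree_obata hI M.obata_preserves_I hJ
    M.obata_preserves_J
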